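/- There is a constant c > 0 such that for all m ≥ 1 and all l with 0 ≤ l ≤ 2m−1, ∑_{j=0}^{2m} sin ψ_j · ( 1/|cos ψ_j − cos ξ_l| + sin ψ_j/((2m+1)(cos ψ_j − cos ξ_l)²) ) ≤ c·(2m+1)·log(m+2), where ψ_j = (2j+1)π/(4m+2) and ξ_l = (l+1)π/(2m+1). -/

import Mathlib

/-!
Write `ψ = (2j+1)θ`, `ξ = (2l+2)θ` with `θ = π/(2N)`, `N = 2m+1`. Since
`cos ψ - cos ξ = 2 sin((ψ+ξ)/2) sin((ξ-ψ)/2)`, concavity of `sin` on `[0, π]` gives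
`sin ψ ≤ 2 sin((ψ+ξ)/2)`, and Jordan's inequality gives `|sin((ξ-ψ)/2)| ≥ |ξ-ψ|/π`, we get
`sin ψ / |cos ψ - cos ξ| ≤ π / |ξ - ψ| = 2N/|k|` with `k = 2l+1-2j` odd. The second summand is
`N⁻¹` times the square of the first, so each term is at most `6N/|k|`, and summing `1/|k|` over
`j` gives at most twice a harmonic number, i.e. `O(log N)`.
-/

open Finset Real

lemma sin_le_two_mul_sin_add_div_two {ψ ξ : ℝ} (hψ : ψ ∈ Set.Icc 0 π) (hξ : ξ ∈ Set.Icc 0 π) :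
    sin ψ ≤ 2 * sin ((ψ + ξ) / 2) := by
  have hconc := strictConcaveOn_sin_Icc.concaveOn.2 hψ hξ (by norm_num : (0 : ℝ) ≤ 1 / 2)
    (by norm_num : (0 : ℝ) ≤ 1 / 2) (by norm_num)
  have hsinξ : 0 ≤ sin ξ := sin_nonneg_of_nonneg_of_le_pi hξ.1 hξ.2
  simp only [smul_eq_mul] at hconc
  rw [show (ψ + ξ) / 2 = 1 / 2 * ψ + 1 / 2 * ξ by ring]
  linarith

lemma sin_mul_abs_sub_le_pi_mul_abs_cos_sub_cos {ψ ξ : ℝ} (hψ : ψ ∈ Set.Icc 0 π)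
    (hξ : ξ ∈ Set.Icc 0 π) : sin ψ * |ξ - ψ| ≤ π * |cos ψ - cos ξ| := by
  have hx : |(ξ - ψ) / 2| ≤ π / 2 := by
    rw [abs_le]; constructor <;> linarith [hψ.1, hψ.2, hξ.1, hξ.2]
  have hjordan : |ξ - ψ| ≤ π * |sin ((ξ - ψ) / 2)| := by
    have := mul_abs_le_abs_sin hx
    rw [abs_div, abs_two] at this
    field_simp at this
    linarith
  have hS : 0 ≤ sin ((ψ + ξ) / 2) :=
    sin_nonneg_of_nonneg_of_le_pi (by linarith [hψ.1, hξ.1]) (by linarith [hψ.2, hξ.2])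
  have hfactor : |cos ψ - cos ξ| = 2 * sin ((ψ + ξ) / 2) * |sin ((ξ - ψ) / 2)| := by
    rw [cos_sub_cos, show (ψ - ξ) / 2 = -((ξ - ψ) / 2) by ring, sin_neg]
    simp only [abs_mul, abs_neg, abs_two, abs_of_nonneg hS]
  calc sin ψ * |ξ - ψ| ≤ 2 * sin ((ψ + ξ) / 2) * (π * |sin ((ξ - ψ) / 2)|) :=
        mul_le_mul (sin_le_two_mul_sin_add_div_two hψ hξ) hjordan (abs_nonneg _) (by positivity)
    _ = π * |cos ψ - cos ξ| := by rw [hfactor]; ring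

noncomputable def kernelTerm (N ψ ξ : ℝ) : ℝ :=
  sin ψ * (1 / |cos ψ - cos ξ| + sin ψ / (N * (cos ψ - cos ξ) ^ 2))

lemma kernelTerm_le {N ψ ξ : ℝ} (hN : 0 < N) (hψ : ψ ∈ Set.Icc 0 π) (hξ : ξ ∈ Set.Icc 0 π)
    (hne : ψ ≠ ξ) : kernelTerm N ψ ξ ≤ π / |ξ - ψ| + π ^ 2 / (N * (ξ - ψ) ^ 2) := by
  have hd : 0 < |ξ - ψ| := abs_pos.2 (sub_ne_zero.2 hne.symm)
  have hD : 0 < |cos ψ - cos ξ| := abs_pos.2 (sub_ne_zero.2 fun h => hne (injOn_cos hψ hξ h))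
  have hratio : sin ψ / |cos ψ - cos ξ| ≤ π / |ξ - ψ| := by
    rw [div_le_div_iff₀ hD hd]
    exact sin_mul_abs_sub_le_pi_mul_abs_cos_sub_cos hψ hξ
  have hratio0 : 0 ≤ sin ψ / |cos ψ - cos ξ| :=
    div_nonneg (sin_nonneg_of_nonneg_of_le_pi hψ.1 hψ.2) hD.le
  calc kernelTerm N ψ ξ = sin ψ / |cos ψ - cos ξ| + (sin ψ / |cos ψ - cos ξ|) ^ 2 / N := by
        rw [kernelTerm, div_pow, sq_abs]; field_simp
    _ ≤ π / |ξ - ψ| + (π / |ξ - ψ|) ^ 2 / N := by gcongr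
    _ = π / |ξ - ψ| + π ^ 2 / (N * (ξ - ψ) ^ 2) := by rw [div_pow, sq_abs]; field_simp

lemma one_le_abs_two_mul_add_one_sub_two_mul (l j : ℕ) : 1 ≤ |2 * (l : ℝ) + 1 - 2 * j| := by
  rcases le_or_gt j l with h | h
  · have : (j : ℝ) ≤ l := by exact_mod_cast h
    rw [abs_of_pos (by linarith)]; linarith
  · have : (l : ℝ) + 1 ≤ j := by exact_mod_cast h
    rw [abs_of_neg (by linarith)]; linarith

lemma kernelTerm_nodes_le {m j l : ℕ} (hj : j ≤ 2 * m) (hl : l + 1 ≤ 2 * m + 1) :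
    kernelTerm (2 * m + 1) ((2 * (j : ℝ) + 1) * π / (4 * m + 2)) (((l : ℝ) + 1) * π / (2 * m + 1))
      ≤ 6 * (2 * m + 1) / |2 * (l : ℝ) + 1 - 2 * j| := by
  have hjR : (j : ℝ) ≤ 2 * m := by exact_mod_cast hj
  have hlR : (l : ℝ) + 1 ≤ 2 * m + 1 := by exact_mod_cast hl
  set k : ℝ := 2 * (l : ℝ) + 1 - 2 * j
  have hk : 1 ≤ |k| := one_le_abs_two_mul_add_one_sub_two_mul l j
  have hk0 : 0 < |k| := by linarith
  have hdiff : ((l : ℝ) + 1) * π / (2 * m + 1) - (2 * (j : ℝ) + 1) * π / (4 * m + 2)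
      = k * π / (4 * m + 2) := by field_simp; ring
  have hψ : (2 * (j : ℝ) + 1) * π / (4 * m + 2) ∈ Set.Icc 0 π := by
    refine ⟨by positivity, ?_⟩
    rw [div_le_iff₀ (by positivity)]; nlinarith [pi_pos]
  have hξ : ((l : ℝ) + 1) * π / (2 * m + 1) ∈ Set.Icc 0 π := by
    refine ⟨by positivity, ?_⟩
    rw [div_le_iff₀ (by positivity)]; nlinarith [pi_pos]
  have hne : ((l : ℝ) + 1) * π / (2 * m + 1) - (2 * (j : ℝ) + 1) * π / (4 * m + 2) ≠ 0 := by
    rw [hdiff]; exact div_ne_zero (mul_ne_zero (abs_pos.1 hk0) pi_ne_zero) (by positivity)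
  refine (kernelTerm_le (by positivity) hψ hξ (sub_ne_zero.1 hne).symm).trans ?_
  calc π / |((l : ℝ) + 1) * π / (2 * m + 1) - (2 * (j : ℝ) + 1) * π / (4 * m + 2)| +
        π ^ 2 / ((2 * m + 1) * (((l : ℝ) + 1) * π / (2 * m + 1) -
          (2 * (j : ℝ) + 1) * π / (4 * m + 2)) ^ 2)
      = 2 * (2 * m + 1) / |k| + 4 * (2 * m + 1) / |k| ^ 2 := by
        rw [hdiff, abs_div, abs_mul, abs_of_pos pi_pos,
          abs_of_pos (by positivity : (0 : ℝ) < 4 * m + 2), div_pow, mul_pow, ← sq_abs k]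
        field_simp
        ring
    _ ≤ 2 * (2 * m + 1) / |k| + 4 * (2 * m + 1) / |k| := by
        gcongr
        exact le_self_pow₀ hk two_ne_zero
    _ = 6 * (2 * m + 1) / |k| := by ring

lemma sum_range_one_div_two_mul_add_one_le_harmonic {M n : ℕ} (h : M ≤ n) :
    ∑ i ∈ range M, 1 / (2 * (i : ℝ) + 1) ≤ harmonic n := by
  calc ∑ i ∈ range M, 1 / (2 * (i : ℝ) + 1) ≤ ∑ i ∈ range n, 1 / ((i : ℝ) + 1) := by
        refine (sum_le_sum fun i _ => ?_).trans
          (sum_le_sum_of_subset_of_nonneg (range_subset_range.2 h) fun _ _ _ => by positivity)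
        gcongr
        linarith [(i.cast_nonneg : (0 : ℝ) ≤ i)]
    _ = harmonic n := by simp [harmonic, one_div]

lemma sum_range_one_div_abs_two_mul_add_one_sub_two_mul_le {n l : ℕ} (hl : l < n) :
    ∑ j ∈ range n, 1 / |2 * (l : ℝ) + 1 - 2 * j| ≤ 2 * harmonic n := by
  rw [← sum_range_add_sum_Ico _ (show l + 1 ≤ n from hl), sum_Ico_eq_sum_range,
    ← sum_range_reflect]
  have hbelow : ∀ i ∈ range (l + 1),
      1 / |2 * (l : ℝ) + 1 - 2 * ((l + 1 - 1 - i : ℕ) : ℝ)| = 1 / (2 * (i : ℝ) + 1) := by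
    intro i hi
    rw [Nat.add_sub_cancel, Nat.cast_sub (mem_range_succ_iff.1 hi),
      show 2 * (l : ℝ) + 1 - 2 * ((l : ℝ) - i) = 2 * i + 1 by ring, abs_of_pos (by positivity)]
  have habove : ∀ i ∈ range (n - (l + 1)),
      1 / |2 * (l : ℝ) + 1 - 2 * ((l + 1 + i : ℕ) : ℝ)| = 1 / (2 * (i : ℝ) + 1) := by
    intro i _
    push_cast
    rw [show 2 * (l : ℝ) + 1 - 2 * (l + 1 + i) = -(2 * i + 1) by ring, abs_neg,
      abs_of_pos (by positivity)]
  rw [sum_congr rfl hbelow, sum_congr rfl habove, two_mul]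
  gcongr
  · exact sum_range_one_div_two_mul_add_one_le_harmonic hl
  · exact sum_range_one_div_two_mul_add_one_le_harmonic (Nat.sub_le _ _)

lemma harmonic_two_mul_add_one_le_three_mul_log {m : ℕ} (hm : 1 ≤ m) :
    (harmonic (2 * m + 1) : ℝ) ≤ 3 * log (m + 2) := by
  have hm1 : (1 : ℝ) ≤ m := by exact_mod_cast hm
  have hlog_ge_one : 1 ≤ log (m + 2) := by
    rw [le_log_iff_exp_le (by positivity)]
    linarith [exp_one_lt_d9]
  have hlog_le : log (2 * m + 1) ≤ 2 * log (m + 2) := by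
    rw [← log_rpow (by positivity)]
    exact log_le_log (by positivity) (by norm_num; nlinarith)
  have := harmonic_le_one_add_log (2 * m + 1)
  push_cast at this
  linarith

/-- Key kernel-sum estimate: there is a constant `c > 0` such that for all `m ≥ 1` and
all `l` with `0 ≤ l ≤ 2m−1`,
`∑_{j=0}^{2m} sin ψ_j (1/|cos ψ_j − cos ξ_l| + sin ψ_j/((2m+1)(cos ψ_j − cos ξ_l)²))
  ≤ c (2m+1) log(m+2)`,
where `ψ_j = (2j+1)π/(4m+2)` and `ξ_l = (l+1)π/(2m+1)`. -/
theorem kernel_sum_estimate :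
    ∃ c : ℝ, 0 < c ∧ ∀ m : ℕ, 1 ≤ m → ∀ l : ℕ, l ≤ 2 * m - 1 →
      (∑ j ∈ range (2 * m + 1),
          Real.sin ((2 * (j : ℝ) + 1) * Real.pi / (4 * m + 2)) *
            (1 / |Real.cos ((2 * (j : ℝ) + 1) * Real.pi / (4 * m + 2)) -
                Real.cos (((l : ℝ) + 1) * Real.pi / (2 * m + 1))| +
              Real.sin ((2 * (j : ℝ) + 1) * Real.pi / (4 * m + 2)) /
                ((2 * (m : ℝ) + 1) *
                  (Real.cos ((2 * (j : ℝ) + 1) * Real.pi / (4 * m + 2)) -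
                    Real.cos (((l : ℝ) + 1) * Real.pi / (2 * m + 1))) ^ 2))) ≤
        c * (2 * (m : ℝ) + 1) * Real.log (m + 2) := by
  refine ⟨36, by norm_num, fun m hm l hl => ?_⟩
  have hl' : l + 1 ≤ 2 * m + 1 := by omega
  calc ∑ j ∈ range (2 * m + 1), kernelTerm (2 * m + 1) ((2 * (j : ℝ) + 1) * π / (4 * m + 2))
        (((l : ℝ) + 1) * π / (2 * m + 1))
      ≤ ∑ j ∈ range (2 * m + 1), 6 * (2 * m + 1) * (1 / |2 * (l : ℝ) + 1 - 2 * j|) := by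
        refine sum_le_sum fun j hj => ?_
        rw [mul_one_div]
        exact kernelTerm_nodes_le (Nat.lt_succ_iff.1 (mem_range.1 hj)) hl'
    _ = 6 * (2 * m + 1) * ∑ j ∈ range (2 * m + 1), 1 / |2 * (l : ℝ) + 1 - 2 * j| := by
        rw [mul_sum]
    _ ≤ 6 * (2 * m + 1) * (2 * (3 * log (m + 2))) := by
        gcongr
        exact (sum_range_one_div_abs_two_mul_add_one_sub_two_mul_le hl').trans
          (by gcongr; exact harmonic_two_mul_add_one_le_three_mul_log hm)
    _ = 36 * (2 * m + 1) * log (m + 2) := by ring
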